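/- Let a be a random vector in ℂ^B with independent components a_1,...,a_B. If each |a_i|² satisfies Pr{|a_i|² < ε} ≐ ε^d, then the squared Euclidean norm satisfies Pr{‖a‖² < ε} ≐ ε^{Bd}. -/

import Mathlib

open MeasureTheory ProbabilityTheory Filter Set

/-- `f(ε) ≐ ε^d` : `lim_{ε→0⁺} log f(ε) / log ε = d`. -/
def DotEq (f : ℝ → ℝ) (d : ℝ) : Prop :=
  Tendsto (fun ε => Real.log (f ε) / Real.log ε) (nhdsWithin 0 (Set.Ioi 0)) (nhds d)

open Topology

/-!
Since `‖a‖² = ∑ |a_i|²`, the event `‖a‖² < ε` contains `{∀ i, |a_i|² < ε / B}` and is contained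
in `{∀ i, |a_i|² < ε}`. By independence these two events have probabilities `∏ P_i(ε / B)` and
`∏ P_i(ε)`, where `P_i(ε) = Pr{|a_i|² < ε}`, and both are `≐ ε^{Bd}`: exponents add under
products, and rescaling `ε` by a constant does not change the exponent. The log-ratio of
`Pr{‖a‖² < ε}` is squeezed between them. If some `P_i` vanishes near `0`, then `d = 0`
(as `log 0 = 0`) and `Pr{‖a‖² < ε}` vanishes too.
-/

theorem dotEq_iff_of_eventuallyEq_zero {f : ℝ → ℝ} {n : ℝ} (hf : f =ᶠ[𝓝[>] 0] 0) :
    DotEq f n ↔ n = 0 := by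
  have hratio : (fun ε => Real.log (f ε) / Real.log ε) =ᶠ[𝓝[>] 0] fun _ => 0 :=
    hf.mono fun ε hε => by simp [hε]
  rw [DotEq, tendsto_congr' hratio, tendsto_const_nhds_iff, eq_comm]

theorem tendsto_log_const_mul_div_log {c : ℝ} (hc : 0 < c) :
    Tendsto (fun ε => Real.log (c * ε) / Real.log ε) (𝓝[>] 0) (𝓝 1) := by
  have hlim : Tendsto (fun ε => Real.log c / Real.log ε + 1) (𝓝[>] 0) (𝓝 (0 + 1)) :=
    (tendsto_const_nhds.div_atBot Real.tendsto_log_nhdsGT_zero).add_const 1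
  rw [zero_add] at hlim
  refine hlim.congr' ?_
  filter_upwards [Ioo_mem_nhdsGT one_pos] with ε hε
  rw [Real.log_mul hc.ne' hε.1.ne', add_div, div_self (Real.log_neg hε.1 hε.2).ne]

namespace DotEq

theorem comp_const_mul {f : ℝ → ℝ} {n c : ℝ} (hf : DotEq f n) (hc : 0 < c) :
    DotEq (fun ε => f (c * ε)) n := by
  have hmul : Tendsto (c * ·) (𝓝[>] 0) (𝓝[>] 0) := by
    simpa using TendstoNhdsWithinIoi.const_mul hc (tendsto_id (x := 𝓝[>] (0 : ℝ)))
  have hlim := (hf.comp hmul).mul (tendsto_log_const_mul_div_log hc)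
  rw [mul_one] at hlim
  refine hlim.congr' ?_
  filter_upwards [hmul.eventually (Ioo_mem_nhdsGT one_pos)] with ε hε
  exact div_mul_div_cancel₀ (Real.log_neg hε.1 hε.2).ne

theorem finset_prod {ι : Type*} {s : Finset ι} {f : ι → ℝ → ℝ} {n : ι → ℝ}
    (hf : ∀ i ∈ s, DotEq (f i) (n i)) (hne : ∀ i ∈ s, ∀ᶠ ε in 𝓝[>] 0, f i ε ≠ 0) :
    DotEq (fun ε => ∏ i ∈ s, f i ε) (∑ i ∈ s, n i) := by
  refine (tendsto_finsetSum s hf).congr' ?_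
  filter_upwards [(eventually_all_finset s).2 hne] with ε hε
  rw [Real.log_prod hε, Finset.sum_div]

theorem of_le_of_le {f g h : ℝ → ℝ} {n : ℝ} (hg : DotEq g n) (hh : DotEq h n)
    (hg_pos : ∀ᶠ ε in 𝓝[>] 0, 0 < g ε) (hgf : ∀ᶠ ε in 𝓝[>] 0, g ε ≤ f ε)
    (hfh : ∀ᶠ ε in 𝓝[>] 0, f ε ≤ h ε) : DotEq f n := by
  have hlog : ∀ᶠ ε in 𝓝[>] (0 : ℝ), Real.log ε ≤ 0 := by
    filter_upwards [Ioo_mem_nhdsGT one_pos] with ε hε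
    exact (Real.log_neg hε.1 hε.2).le
  refine tendsto_of_tendsto_of_tendsto_of_le_of_le' hh hg ?_ ?_
  · filter_upwards [hg_pos, hgf, hfh, hlog] with ε hg0 hgf hfh hlog
    exact div_le_div_of_nonpos_of_le hlog (Real.log_le_log (hg0.trans_le hgf) hfh)
  · filter_upwards [hg_pos, hgf, hlog] with ε hg0 hgf hlog
    exact div_le_div_of_nonpos_of_le hlog (Real.log_le_log hg0 hgf)

end DotEq

namespace ProbabilityTheory

theorem iIndepFun.measureReal_iInter_preimage {Ω ι : Type*} [Fintype ι] {_ : MeasurableSpace Ω}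
    {μ : Measure Ω} {κ : ι → Type*} [∀ i, MeasurableSpace (κ i)] {X : ∀ i, Ω → κ i}
    (hX : iIndepFun X μ) {t : ∀ i, Set (κ i)} (ht : ∀ i, MeasurableSet (t i)) :
    μ.real (⋂ i, X i ⁻¹' t i) = ∏ i, μ.real (X i ⁻¹' t i) := by
  rw [measureReal_def, hX.meas_iInter fun i => ⟨t i, ht i, rfl⟩, ENNReal.toReal_prod]
  rfl

end ProbabilityTheory

namespace EuclideanSpace

variable {𝕜 ι : Type*} [RCLike 𝕜] [Fintype ι]

theorem norm_apply_sq_le (x : EuclideanSpace 𝕜 ι) (i : ι) : ‖x i‖ ^ 2 ≤ ‖x‖ ^ 2 := by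
  gcongr
  exact PiLp.norm_apply_le x i

theorem norm_sq_lt_of_forall_norm_apply_sq_lt [Nonempty ι] {x : EuclideanSpace 𝕜 ι} {ε : ℝ}
    (h : ∀ i, ‖x i‖ ^ 2 < (Fintype.card ι : ℝ)⁻¹ * ε) : ‖x‖ ^ 2 < ε :=
  calc ‖x‖ ^ 2 = ∑ i, ‖x i‖ ^ 2 := norm_sq_eq x
    _ < ∑ _i : ι, (Fintype.card ι : ℝ)⁻¹ * ε :=
      Finset.sum_lt_sum_of_nonempty Finset.univ_nonempty fun i _ => h i
    _ = ε := by simp [Finset.card_univ]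

end EuclideanSpace

namespace ProbabilityTheory

variable {𝕜 ι Ω : Type*} [RCLike 𝕜] [Fintype ι] [MeasurableSpace Ω] {μ : Measure Ω}
  {X : Ω → EuclideanSpace 𝕜 ι}

theorem iIndepFun.measureReal_forall_norm_sq_lt (hX : iIndepFun (fun i ω => X ω i) μ) (ε : ℝ) :
    μ.real {ω | ∀ i, ‖X ω i‖ ^ 2 < ε} = ∏ i, μ.real {ω | ‖X ω i‖ ^ 2 < ε} := by
  rw [ofPred_forall]
  exact hX.measureReal_iInter_preimage fun _ =>
    measurableSet_lt (by fun_prop : Measurable fun z : 𝕜 => ‖z‖ ^ 2) measurable_const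

theorem measureReal_norm_sq_lt_le_prod [IsFiniteMeasure μ]
    (hX : iIndepFun (fun i ω => X ω i) μ) (ε : ℝ) :
    μ.real {ω | ‖X ω‖ ^ 2 < ε} ≤ ∏ i, μ.real {ω | ‖X ω i‖ ^ 2 < ε} := by
  rw [← hX.measureReal_forall_norm_sq_lt]
  exact measureReal_mono fun ω hω i => (EuclideanSpace.norm_apply_sq_le _ i).trans_lt hω

theorem prod_le_measureReal_norm_sq_lt [Nonempty ι] [IsFiniteMeasure μ]
    (hX : iIndepFun (fun i ω => X ω i) μ) (ε : ℝ) :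
    ∏ i, μ.real {ω | ‖X ω i‖ ^ 2 < (Fintype.card ι : ℝ)⁻¹ * ε} ≤
      μ.real {ω | ‖X ω‖ ^ 2 < ε} := by
  rw [← hX.measureReal_forall_norm_sq_lt]
  exact measureReal_mono fun ω hω => EuclideanSpace.norm_sq_lt_of_forall_norm_apply_sq_lt hω

end ProbabilityTheory

theorem norm_sq_dot_exponent_of_indep_components_general
    {Ω : Type*} [MeasureSpace Ω] [IsProbabilityMeasure (ℙ : Measure Ω)]
    (B : ℕ) [NeZero B] (a : Ω → EuclideanSpace ℂ (Fin B)) (d : ℝ)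
    (hindep : iIndepFun (fun i ω => a ω i) ℙ)
    (hdot : ∀ i, DotEq (fun ε => (ℙ {ω | ‖a ω i‖ ^ 2 < ε}).toReal) d) :
    DotEq (fun ε => (ℙ {ω | ‖a ω‖ ^ 2 < ε}).toReal) (B * d) := by
  set P : Fin B → ℝ → ℝ := fun i ε => (ℙ {ω | ‖a ω i‖ ^ 2 < ε}).toReal
  have hupper := measureReal_norm_sq_lt_le_prod hindep
  have hlower := prod_le_measureReal_norm_sq_lt hindep
  simp only [Fintype.card_fin] at hlower
  have hB : (0 : ℝ) < (B : ℝ)⁻¹ := inv_pos.2 (Nat.cast_pos.2 (NeZero.pos B))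
  by_cases hpos : ∀ i, ∀ ε > 0, 0 < P i ε
  · have hprod : DotEq (fun ε => ∏ i, P i ε) (B * d) := by
      simpa using DotEq.finset_prod (s := Finset.univ) (fun i _ => hdot i) fun i _ =>
        eventually_mem_nhdsWithin.mono fun ε hε => (hpos i ε hε).ne'
    refine (hprod.comp_const_mul hB).of_le_of_le hprod ?_
      (.of_forall hlower) (.of_forall hupper)
    filter_upwards [eventually_mem_nhdsWithin] with ε hε
    exact Finset.prod_pos fun i _ => hpos i _ (mul_pos hB hε)
  · push Not at hpos
    obtain ⟨i, δ, hδ, hPi⟩ := hpos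
    have hzero : P i =ᶠ[𝓝[>] 0] 0 := by
      filter_upwards [Ioo_mem_nhdsGT hδ] with ε hε
      exact le_antisymm ((measureReal_mono fun ω hω => hω.trans hε.2).trans hPi)
        measureReal_nonneg
    rw [(dotEq_iff_of_eventuallyEq_zero hzero).1 (hdot i), mul_zero,
      dotEq_iff_of_eventuallyEq_zero]
    filter_upwards [hzero] with ε hε
    exact le_antisymm ((hupper ε).trans_eq (Finset.prod_eq_zero (Finset.mem_univ i) hε))
      measureReal_nonneg

theorem norm_sq_dot_exponent_of_indep_components
    {Ω : Type*} [MeasureSpace Ω] [IsProbabilityMeasure (ℙ : Measure Ω)]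
    (B : ℕ) [NeZero B] (a : Ω → EuclideanSpace ℂ (Fin B)) (d : ℝ)
    (hmeas : ∀ i, Measurable fun ω => a ω i)
    (hindep : iIndepFun (fun i ω => a ω i) ℙ)
    (hdot : ∀ i, DotEq (fun ε => (ℙ {ω | ‖a ω i‖ ^ 2 < ε}).toReal) d) :
    DotEq (fun ε => (ℙ {ω | ‖a ω‖ ^ 2 < ε}).toReal) (B * d) :=
  norm_sq_dot_exponent_of_indep_components_general B a d hindep hdot
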